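/- Let q be a prime power and let M be a simple GF(q)-representable matroid with no coloops that has two distinct loose elements e and f such that {e, f} is not a cocircuit of M. If M has a spanning circuit containing exactly one of e and f, then r(M) ≤ 2q − 1. -/

import Mathlib

namespace LoosePaper

open Set
open scoped Matroid

variable {α β : Type*}

/-- A circuit of a matroid: a minimal dependent set. -/
def Circuit (M : Matroid α) (C : Set α) : Prop :=
  M.Dep C ∧ ∀ D, M.Dep D → D ⊆ C → D = C

/-- The rank of a matroid: the (common) cardinality of its bases. -/
noncomputable def rank (M : Matroid α) : ℕ :=
  sInf {n | ∃ B, M.IsBase B ∧ B.ncard = n}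

/-- An element is loose if every circuit containing it has size at least the rank. -/
def Loose (M : Matroid α) (e : α) : Prop :=
  e ∈ M.E ∧ ∀ C, Circuit M C → e ∈ C → rank M ≤ C.ncard

/-- An element is free if every circuit containing it is spanning. -/
def FreeElt (M : Matroid α) (e : α) : Prop :=
  e ∈ M.E ∧ ∀ C, Circuit M C → e ∈ C → M.closure C = M.E

/-- A coloop: an element contained in every base. -/
def Coloop (M : Matroid α) (e : α) : Prop :=
  e ∈ M.E ∧ ∀ B, M.IsBase B → e ∈ B

def NoColoops (M : Matroid α) : Prop := ∀ e, ¬ Coloop M e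

/-- A matroid is simple if every pair of its elements is independent. -/
def Simple (M : Matroid α) : Prop :=
  ∀ e ∈ M.E, ∀ f ∈ M.E, M.Indep {e, f}

/-- A matroid is paving if every circuit has size at least the rank. -/
def Paving (M : Matroid α) : Prop :=
  ∀ C, Circuit M C → rank M ≤ C.ncard

/-- `M` is representable over the field `F`. -/
def Representable (M : Matroid α) (F : Type*) [Field F] : Prop :=
  ∃ (ι : Type) (v : α → ι → F),
    ∀ I, I ⊆ M.E → (M.Indep I ↔ LinearIndependent F (fun x : I => v x.1))

/-- `N` is the vector matroid, on ground set all of `η`, of the matrix whose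
column labelled by `c : η` is `A c`. -/
def IsVectorMatroidOn (F : Type*) [Field F] {η ι : Type*} (A : η → ι → F)
    (N : Matroid η) : Prop :=
  N.E = Set.univ ∧ ∀ I : Set η, (N.Indep I ↔ LinearIndependent F (fun x : I => A x.1))

/-- `φ` is an isomorphism from `M` to `N`. -/
def IsIsoTo (M : Matroid α) (N : Matroid β) (φ : α → β) : Prop :=
  Set.BijOn φ M.E N.E ∧ ∀ I, I ⊆ M.E → (M.Indep I ↔ N.Indep (φ '' I))

/-- The matrix `[I_r | D]` of the matroid `M_r`; the column `Sum.inl i` is the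
`i`-th standard basis vector, the column `Sum.inr 0` (the distinguished element `z`)
is the all-ones vector, and for `1 ≤ j ≤ r-1` the column `Sum.inr j` has ones
exactly in rows `0` and `j` (`0`-indexed). -/
def MrMatrix (r : ℕ) : (Fin r ⊕ Fin r) → Fin r → ZMod 2
  | Sum.inl i => fun k => if k = i then 1 else 0
  | Sum.inr j => fun k =>
      if j.val = 0 then 1 else if k.val = 0 ∨ k = j then 1 else 0

/-- The matrix `[I_r | D]` of the matroid `N_r`; the column `Sum.inr 0`
(the distinguished element `z`) is `(0,1,…,1)ᵀ`, and for `1 ≤ j ≤ r-2` the column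
`Sum.inr j` has ones exactly in rows `0`, `1` and `j+1` (`0`-indexed). -/
def NrMatrix (r : ℕ) : (Fin r ⊕ Fin (r - 1)) → Fin r → ZMod 2
  | Sum.inl i => fun k => if k = i then 1 else 0
  | Sum.inr j => fun k =>
      if j.val = 0 then (if k.val = 0 then 0 else 1)
      else if k.val = 0 ∨ k.val = 1 ∨ k.val = j.val + 1 then 1 else 0

/-- The matrix `[I_r | D]` of the matroid `L_r`; the columns of `D` are the all-ones
vector, `(1,1,0,…,0)ᵀ`, `(1,0,1,0,…,0)ᵀ` and `(0,1,1,0,…,0)ᵀ`. -/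
def LrMatrix (r : ℕ) : (Fin r ⊕ Fin 4) → Fin r → ZMod 2
  | Sum.inl i => fun k => if k = i then 1 else 0
  | Sum.inr j => fun k =>
      if j = 0 then 1
      else if j = 1 then (if k.val = 0 ∨ k.val = 1 then 1 else 0)
      else if j = 2 then (if k.val = 0 ∨ k.val = 2 then 1 else 0)
      else if k.val = 1 ∨ k.val = 2 then 1 else 0

/-- The matrix `[I_r | D]` of the matroid `J_r`; the columns of `D` are
`(0,1,1,…,1)ᵀ`, `(1,1,1,0,…,0)ᵀ`, `(1,1,0,1,0,…,0)ᵀ` and `(1,0,1,1,0,…,0)ᵀ`. -/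
def JrMatrix (r : ℕ) : (Fin r ⊕ Fin 4) → Fin r → ZMod 2
  | Sum.inl i => fun k => if k = i then 1 else 0
  | Sum.inr j => fun k =>
      if j = 0 then (if k.val = 0 then 0 else 1)
      else if j = 1 then (if k.val = 0 ∨ k.val = 1 ∨ k.val = 2 then 1 else 0)
      else if j = 2 then (if k.val = 0 ∨ k.val = 1 ∨ k.val = 3 then 1 else 0)
      else if k.val = 0 ∨ k.val = 2 ∨ k.val = 3 then 1 else 0

/-- A matrix over `GF(3)` whose vector matroid is `U_{2,4}`. -/
def U24Matrix : Fin 4 → Fin 2 → ZMod 3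
  | 0 => fun k => if k = 0 then 1 else 0
  | 1 => fun k => if k = 1 then 1 else 0
  | 2 => fun _ => 1
  | 3 => fun k => if k = 0 then 1 else 2

/-- A `GF(3)`-matrix representing the matroid obtained from a circuit
`{e, c_0, …, c_{n-1}}` (where `e` is the element `Sum.inl ()`) by 2-summing a copy
of `U_{2,4}` across each element `c_d` with `d ∈ D`.  For `d ∉ D` the element
`Sum.inr (d, 0)` is `c_d`, and for `d ∈ D` the elements `Sum.inr (d, j)`,
`j = 0, 1, 2`, are the three elements of the copy of `U_{2,4}` other than its
basepoint. -/
def thetaMatrix (n : ℕ) (D : Finset (Fin n)) :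
    (Unit ⊕ Fin n × Fin 3) → (Fin n ⊕ Fin n) → ZMod 3
  | Sum.inl _ => fun row => Sum.elim (fun _ => 1) (fun _ => 0) row
  | Sum.inr (d, j) => fun row =>
      let ed : (Fin n ⊕ Fin n) → ZMod 3 :=
        Sum.elim (fun i => if i = d then 1 else 0) (fun _ => 0)
      let wd : (Fin n ⊕ Fin n) → ZMod 3 :=
        Sum.elim (fun _ => 0) (fun i => if i = d then 1 else 0)
      if d ∈ D then
        (if j = 0 then wd row else if j = 1 then ed row + wd row else ed row - wd row)
      else ed row

/-- The ground set of the 2-sum construction: the circuit element `e`, the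
untouched circuit elements `c_d` for `d ∉ D`, and three `U_{2,4}`-elements for
each `d ∈ D`. -/
def thetaGround (n : ℕ) (D : Finset (Fin n)) : Set (Unit ⊕ Fin n × Fin 3) :=
  {x | ∀ d : Fin n, ∀ j : Fin 3, x = Sum.inr (d, j) → (j = 0 ∨ d ∈ D)}

/-!
Let `C` be the spanning circuit and `g` the loose element outside it, and represent `M` by
vectors over `F`. By minimality of `C`, a nonzero linear relation `μ` on `C` is supported on
all of `C`; since `C` spans, `g = Σ λ_c c`. Then `g = Σ (λ_c + t μ_c) c` for every `t ∈ F`, so `g`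
together with the support of `λ + t μ` is dependent and contains a circuit. That circuit is `C`
itself or contains `g`, so it has at least `r(M)` elements, and `λ + t μ` vanishes on at most two
of the `r(M) + 1` elements of `C`. Each `c ∈ C` is a zero of `λ + t μ` for exactly one `t`, namely
`t = -λ_c / μ_c`, hence `r(M) + 1 ≤ 2q`.
-/

lemma circuit_iff_isCircuit {M : Matroid α} {C : Set α} : Circuit M C ↔ M.IsCircuit C :=
  Matroid.isCircuit_iff.symm

lemma rank_eq_ncard {M : Matroid α} {B : Set α} (hB : M.IsBase B) : rank M = B.ncard :=
  le_antisymm (Nat.sInf_le ⟨B, hB, rfl⟩) <| le_csInf ⟨_, B, hB, rfl⟩ fun _ ⟨_, hB', h⟩ =>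
    h ▸ (hB.ncard_eq_ncard_of_isBase hB').le

lemma ncard_eq_rank_add_one_of_isCircuit {M : Matroid α} {C : Set α} (hC : M.IsCircuit C)
    (hCfin : C.Finite) (hspan : M.closure C = M.E) : C.ncard = rank M + 1 := by
  obtain ⟨c, hc⟩ := hC.nonempty
  have hB : M.IsBase (C \ {c}) := (hC.sdiff_singleton_indep hc).isBase_of_ground_subset_closure
    (by rw [hC.closure_sdiff_singleton_eq, hspan])
  rw [rank_eq_ncard hB, Set.ncard_sdiff_singleton_add_one hc hCfin]

lemma card_le_mul_card_of_card_zeros_le {F : Type*} [Field F] [Fintype F] [DecidableEq F]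
    (s : Finset α) (a b : α → F) (hb : ∀ c ∈ s, b c ≠ 0) (n : ℕ)
    (hzeros : ∀ t : F, (s.filter fun c => a c + t * b c = 0).card ≤ n) :
    s.card ≤ n * Fintype.card F := by
  refine Finset.card_le_mul_card_image_of_maps_to (f := fun c => -a c / b c)
    (fun _ _ => Finset.mem_univ _) n fun t _ => (Finset.card_le_card ?_).trans (hzeros t)
  intro c hc
  obtain ⟨hcs, rfl⟩ := Finset.mem_filter.1 hc
  refine Finset.mem_filter.2 ⟨hcs, ?_⟩
  field_simp [hb c hcs]
  ring

def IsRepresentation (F : Type*) {W : Type*} [Field F] [AddCommGroup W] [Module F W]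
    (M : Matroid α) (v : α → W) : Prop :=
  ∀ I, I ⊆ M.E → (M.Indep I ↔ LinearIndepOn F v I)

namespace IsRepresentation

variable {F W : Type*} [Field F] [AddCommGroup W] [Module F W] {M : Matroid α} {v : α → W}
  {X C : Set α} {g : α}

lemma dep_iff (hv : IsRepresentation F M v) (hX : X ⊆ M.E) :
    M.Dep X ↔ ¬ LinearIndepOn F v X := by
  rw [← Matroid.not_indep_iff hX, hv X hX]

lemma mem_span_of_mem_closure (hv : IsRepresentation F M v) (hg : g ∈ M.closure X) :
    v g ∈ Submodule.span F (v '' X) := by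
  obtain ⟨I, hI⟩ := M.exists_isBasis' X
  refine Submodule.span_mono (Set.image_mono hI.subset) ?_
  rcases hI.indep.mem_closure_iff.1 (hI.closure_eq_closure ▸ hg) with hdep | hgI
  · by_contra hspan
    have hindep : LinearIndepOn F v I := (hv I hI.indep.subset_ground).1 hI.indep
    exact (hv.dep_iff hdep.subset_ground).1 hdep
      (linearIndepOn_insert_iff.2 ⟨hindep, fun h => absurd h hspan⟩)
  · exact Submodule.subset_span (Set.mem_image_of_mem v hgI)

lemma dep_insert_of_mem_span (hv : IsRepresentation F M v) (hg : g ∈ M.E) (hX : X ⊆ M.E)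
    (hgX : g ∉ X) (hspan : v g ∈ Submodule.span F (v '' X)) : M.Dep (insert g X) :=
  (hv.dep_iff (Set.insert_subset hg hX)).2 fun h => hgX ((linearIndepOn_insert_iff.1 h).2 hspan)

lemma exists_relation_support_eq (hv : IsRepresentation F M v) (hC : M.IsCircuit C) :
    ∃ l : α →₀ F, ↑l.support = C ∧ Finsupp.linearCombination F v l = 0 := by
  obtain ⟨l, hlC, hl0, hne⟩ := linearDepOn_iff'.1 ((hv.dep_iff hC.subset_ground).1 hC.dep)
  rw [Finsupp.mem_supported] at hlC
  refine ⟨l, hC.eq_of_dep_subset ?_ hlC, hl0⟩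
  refine (hv.dep_iff (hlC.trans hC.subset_ground)).2 fun h => hne ?_
  exact linearIndepOn_iff.1 h l ((Finsupp.mem_supported F l).2 subset_rfl) hl0

lemma rank_le_card_support_add_one (hv : IsRepresentation F M v) (hC : M.IsCircuit C)
    (hCr : rank M ≤ C.ncard) (hg : Loose M g) (hgC : g ∉ C) (w : α →₀ F)
    (hwC : ↑w.support ⊆ C) (hw : Finsupp.linearCombination F v w = v g) :
    rank M ≤ w.support.card + 1 := by
  have hdep : M.Dep (insert g ↑w.support) :=
    hv.dep_insert_of_mem_span hg.1 (hwC.trans hC.subset_ground) (fun h => hgC (hwC h))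
      ((Finsupp.mem_span_image_iff_linearCombination F).2
        ⟨w, (Finsupp.mem_supported F w).2 subset_rfl, hw⟩)
  obtain ⟨D, hD, hDcirc⟩ := hdep.exists_isCircuit_subset
  have hDr : rank M ≤ D.ncard := by
    by_cases hgD : g ∈ D
    · exact hg.2 D (circuit_iff_isCircuit.2 hDcirc) hgD
    · have hDC : D ⊆ C := fun x hx => hwC ((hD hx).resolve_left (ne_of_mem_of_not_mem hx hgD))
      rwa [hDcirc.eq_of_subset_isCircuit hC hDC]
  calc rank M ≤ D.ncard := hDr
    _ ≤ (insert g (↑w.support : Set α)).ncard :=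
      Set.ncard_le_ncard hD (w.support.finite_toSet.insert g)
    _ ≤ w.support.card + 1 := by
      simpa only [Set.ncard_coe_finset] using Set.ncard_insert_le g (↑w.support : Set α)

theorem rank_le_of_loose_of_spanning_isCircuit [Fintype F] (hv : IsRepresentation F M v)
    (hC : M.IsCircuit C) (hspan : M.closure C = M.E) (hg : Loose M g) (hgC : g ∉ C) :
    rank M ≤ 2 * Fintype.card F - 1 := by
  classical
  obtain ⟨μ, hμC, hμ⟩ := hv.exists_relation_support_eq hC
  obtain ⟨lam, hlamC, hlam⟩ := (Finsupp.mem_span_image_iff_linearCombination F).1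
    (hv.mem_span_of_mem_closure (hspan ▸ hg.1 : g ∈ M.closure C))
  rw [Finsupp.mem_supported] at hlamC
  have hCcard : μ.support.card = rank M + 1 := by
    rw [← Set.ncard_coe_finset, hμC]
    exact ncard_eq_rank_add_one_of_isCircuit hC (hμC ▸ μ.support.finite_toSet) hspan
  have hzeros : ∀ t : F, (μ.support.filter fun c => lam c + t * μ c = 0).card ≤ 2 := by
    intro t
    set w := lam + t • μ
    have hwC : ↑w.support ⊆ C := fun x hx => by
      rcases Finset.mem_union.1 (Finsupp.support_add hx) with h | h
      · exact hlamC h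
      · exact hμC ▸ Finsupp.support_smul h
    have hw : Finsupp.linearCombination F v w = v g := by
      simp [w, hμ, hlam]
    have hr := hv.rank_le_card_support_add_one hC
      (by rw [← hμC, Set.ncard_coe_finset]; omega) hg hgC w hwC hw
    have hwμ : w.support ⊆ μ.support := fun x hx => by
      simpa only [← hμC, Finset.mem_coe] using hwC (Finset.mem_coe.2 hx)
    have hzeros_sub : (μ.support.filter fun c => lam c + t * μ c = 0) ⊆ μ.support \ w.support :=
      fun x hx => by
        rw [Finset.mem_filter] at hx
        simp [w, hx.1, hx.2]
    have := Finset.card_le_card hzeros_sub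
    have := Finset.card_sdiff_add_card_eq_card hwμ
    omega
  have := card_le_mul_card_of_card_zeros_le μ.support lam μ
    (fun c hc => Finsupp.mem_support_iff.1 hc) 2 hzeros
  omega

end IsRepresentation

theorem two_loose_spanning_circuit_general {α : Type*} (q : ℕ) (F : Type) [Field F]
    [Fintype F] (hq : Fintype.card F = q) (M : Matroid α)
    (hrep : Representable M F)
    (e f : α) (he : Loose M e) (hf : Loose M f)
    (hspan : ∃ C, Circuit M C ∧ M.closure C = M.E ∧
      ((e ∈ C ∧ f ∉ C) ∨ (f ∈ C ∧ e ∉ C))) :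
    rank M ≤ 2 * q - 1 := by
  obtain ⟨ι, v, hv : IsRepresentation F M v⟩ := hrep
  obtain ⟨C, hC, hcl, hcase⟩ := hspan
  rw [← hq]
  rcases hcase with ⟨-, hfC⟩ | ⟨-, heC⟩
  · exact hv.rank_le_of_loose_of_spanning_isCircuit (circuit_iff_isCircuit.1 hC) hcl hf hfC
  · exact hv.rank_le_of_loose_of_spanning_isCircuit (circuit_iff_isCircuit.1 hC) hcl he heC

/-- Remark 4.5: if a simple `GF(q)`-representable matroid with no
coloops has two distinct loose elements `e` and `f` such that `{e, f}` is not a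
cocircuit, and has a spanning circuit containing exactly one of `e` and `f`, then
`r(M) ≤ 2q - 1`. -/
theorem two_loose_spanning_circuit {α : Type*} (q : ℕ) (F : Type) [Field F]
    [Fintype F] (hq : Fintype.card F = q) (M : Matroid α) (hsimple : Simple M)
    (hrep : Representable M F) (hcoloops : NoColoops M)
    (e f : α) (hef : e ≠ f) (he : Loose M e) (hf : Loose M f)
    (hnotcocircuit : ¬ Circuit M.dual {e, f})
    (hspan : ∃ C, Circuit M C ∧ M.closure C = M.E ∧
      ((e ∈ C ∧ f ∉ C) ∨ (f ∈ C ∧ e ∉ C))) :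
    rank M ≤ 2 * q - 1 :=
  two_loose_spanning_circuit_general q F hq M hrep e f he hf hspan

end LoosePaper
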